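/- arXiv:1205.2968 — 6 statements merged into one kernel-verified Lean document; each statement's English description precedes it below -/
import Mathlib

section
/- For all positive integers K, M, N, the number N·C(KM+N−1, M−1) is divisible by M, i.e. the generalized Fuss-Catalan number C_M^{(K,N)} = (N/M)·C(KM+N−1, M−1) is a positive integer. -/
theorem fuss_catalan_integer (N M K : ℕ) (hN : 0 < N) (hM : 0 < M) (hK : 0 < K) :
    M ∣ N * Nat.choose (K * M + N - 1) (M - 1) := by
  obtain ⟨n, rfl⟩ := Nat.exists_eq_add_of_lt hN
  obtain ⟨m, rfl⟩ := Nat.exists_eq_add_of_lt hM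
  simp only [zero_add] at *
  have key := Nat.add_one_mul_choose_eq (K * (m + 1) + n) m
  -- key : (K*(m+1)+n).succ * choose (K*(m+1)+n) m = choose (K*(m+1)+n+1) (m+1) * (m+1)
  have h1 : (m + 1) ∣ (K * (m + 1) + n + 1) * Nat.choose (K * (m + 1) + n) m := by
    rw [show K * (m + 1) + n + 1 = (K * (m + 1) + n).succ by rfl, key]
    exact ⟨_, (Nat.mul_comm _ _)⟩
  have h2 : (m + 1) ∣ K * (m + 1) * Nat.choose (K * (m + 1) + n) m :=
    ⟨K * Nat.choose (K * (m + 1) + n) m, by ring⟩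
  have h3 := Nat.dvd_sub h1 h2
  have heq : (K * (m + 1) + n + 1) * Nat.choose (K * (m + 1) + n) m -
      K * (m + 1) * Nat.choose (K * (m + 1) + n) m =
      (n + 1) * Nat.choose (K * (m + 1) + n) m := by
    rw [← Nat.sub_mul]; congr 1; omega
  rw [heq] at h3
  have : K * (m + 1) + (n + 1) - 1 = K * (m + 1) + n := by omega
  simpa [this] using h3
end

section
/- Let A be a square matrix over a commutative ring, x a column vector and yᵗ a row vector. Then det(A + x·yᵗ) = det A + yᵗ · adj(A) · x, where adj(A) is the adjugate (classical adjoint) matrix of A. -/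
/-!
Expand the determinant multilinearly in the rows of `A + x yᵀ`. A term taking the rank-one part
in two rows has two rows proportional to `y` and vanishes, so only `det A` and the terms
`x i * det (A with row i replaced by y)` survive; by Cramer's rule the latter determinant is the
`i`-th entry of `yᵀ adj A`.
-/

open Finset

namespace AlternatingMap

variable {R M N ι : Type*} [CommRing R] [AddCommGroup M] [Module R M] [AddCommGroup N]
  [Module R N] [DecidableEq ι] (f : M [⋀^ι]→ₗ[R] N) (v : ι → M) (c : ι → R) (w : M)

theorem map_piecewise_smul_const_eq_zero {s : Finset ι} (hs : 2 ≤ #s) :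
    f (s.piecewise (fun i => c i • w) v) = 0 := by
  obtain ⟨i, hi, j, hj, hij⟩ := one_lt_card.mp hs
  set u := s.piecewise (fun _ => w) v
  have hcu : s.piecewise (fun i => c i • w) v = s.piecewise (fun i => c i • u i) u := by
    ext k
    by_cases hk : k ∈ s <;> simp [u, hk]
  have hfu : f u = 0 := f.map_eq_zero_of_eq u (by simp [u, hi, hj]) hij
  rw [hcu]
  simpa [hfu] using f.toMultilinearMap.map_piecewise_smul c u s

theorem map_add_smul_const [Fintype ι] :
    f (v + fun i => c i • w) = f v + ∑ i, c i • f (Function.update v i w) := by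
  have hexpand := f.toMultilinearMap.map_add_eq_map_add_linearDeriv_add v (fun i => c i • w)
  simp only [coe_multilinearMap, MultilinearMap.linearDeriv_apply] at hexpand
  rw [hexpand, sum_eq_zero fun s hs =>
    f.map_piecewise_smul_const_eq_zero v c w (mem_filter.mp hs).2, add_zero]
  simp [f.map_update_smul]

end AlternatingMap

namespace Matrix

variable {n R : Type*} [Fintype n] [DecidableEq n] [CommRing R]

theorem det_add_vecMulVec_eq_add_sum_det_updateRow (A : Matrix n n R) (x y : n → R) :
    det (A + vecMulVec x y) = det A + ∑ i, x i * det (A.updateRow i y) :=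
  detRowAlternating.map_add_smul_const A x y

theorem det_updateRow_eq_vecMul_adjugate (A : Matrix n n R) (i : n) (y : n → R) :
    det (A.updateRow i y) = (y ᵥ* adjugate A) i := by
  rw [← cramer_transpose_apply, cramer_eq_adjugate_mulVec, ← adjugate_transpose,
    mulVec_transpose]

theorem det_add_vecMulVec (A : Matrix n n R) (x y : n → R) :
    det (A + vecMulVec x y) = det A + y ⬝ᵥ adjugate A *ᵥ x := by
  simp_rw [det_add_vecMulVec_eq_add_sum_det_updateRow, det_updateRow_eq_vecMul_adjugate,
    dotProduct_mulVec, dotProduct, mul_comm]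

end Matrix

theorem det_rank_one_perturbation {n : ℕ} {R : Type*} [CommRing R]
    (A : Matrix (Fin n) (Fin n) R) (x y : Fin n → R) :
    Matrix.det (A + Matrix.of fun i j => x i * y j) =
      Matrix.det A + ∑ i, ∑ j, y i * Matrix.adjugate A i j * x j := by
  rw [← Matrix.vecMulVec, Matrix.det_add_vecMulVec]
  simp [dotProduct, Matrix.mulVec, mul_sum, mul_assoc]
end

section
/- The generating function of the numbers C_M^{(K,N)} = (N/(KM+N))·C(KM+N, M) is the N-th power of the Fuss-Catalan generating function: Σ_{M≥0} C_M^{(K,N)} t^M = (Σ_{M≥0} C_M^{(K,1)} t^M)^N as formal power series. -/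
/-!
Write `R_c = ∑ₖ c/(bk+c)·C(bk+c, k) tᵏ` (Raney numbers; `b = K`). In the division-free form
`C(n, k) - b·C(n-1, k-1)`, `n = bk+c`, Pascal's rule gives `R_{c+1} = R_c + t·R_{c+b}`, with `R_0 = 1`.
Comparing coefficients of `t^{n+1}` in `R_a·R_{c+1} = R_a·R_c + t·R_a·R_{c+b}` proves
`R_a·R_c = R_{a+c}` by induction on `n` and then on `c`; hence `R_N = R_1^N`.
-/

open PowerSeries

/-- `raney b c k = c/(bk+c)·C(bk+c, k)` for `c > 0`; at `c = 0` it is `1, 0, 0, …`. -/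
def raney (b c : ℕ) : ℕ → ℤ
  | 0 => 1
  | k + 1 => ((b * (k + 1) + c).choose (k + 1) : ℤ) - b * (b * (k + 1) + c - 1).choose k

section Raney

variable (b : ℕ)

@[simp]
lemma raney_apply_zero (c : ℕ) : raney b c 0 = 1 := rfl

lemma raney_zero_succ (k : ℕ) : raney b 0 (k + 1) = 0 := by
  simp [raney, Nat.choose_mul_right k.succ_ne_zero]

lemma raney_succ_succ (c k : ℕ) :
    raney b (c + 1) (k + 1) = raney b c (k + 1) + raney b (c + b) k := by
  cases k with
  | zero => simp [raney]
  | succ j =>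
    have hn : b * (j + 1) + (c + b) = b * (j + 1 + 1) + c := by ring
    simp only [raney, hn, ← add_assoc, Nat.add_sub_cancel, Nat.choose_succ_succ' _ (j + 1)]
    rcases Nat.eq_zero_or_pos b with rfl | hb
    · simp [add_comm]
    · rw [Nat.choose_succ_right _ _ (by positivity)]
      push_cast
      ring

lemma raney_eq_div_mul_choose {F : Type*} [Field F] [CharZero F] {c : ℕ} (hc : 0 < c) (k : ℕ) :
    (c : F) / (b * k + c) * ((b * k + c).choose k : ℕ) = raney b c k := by
  cases k with
  | zero => simp [hc.ne']
  | succ k =>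
    obtain ⟨m, hm⟩ : ∃ m, b * (k + 1) + c = m + 1 :=
      ⟨_, (Nat.succ_pred_eq_of_pos (by positivity)).symm⟩
    have key : ((m + 1 : ℕ) : F) * (m.choose k : ℕ) = ((m + 1).choose (k + 1) : ℕ) * (k + 1) := by
      exact_mod_cast Nat.add_one_mul_choose_eq m k
    have hN : (b * (k + 1 : ℕ) + c : F) = ((m + 1 : ℕ) : F) := by exact_mod_cast hm
    simp only [raney, hm, Nat.add_sub_cancel, hN]
    rw [div_mul_eq_mul_div, div_eq_iff (Nat.cast_ne_zero.mpr m.succ_ne_zero)]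
    push_cast at hN key ⊢
    linear_combination (b : F) * key + ((m + 1).choose (k + 1) : F) * hN

end Raney

section RaneySeries

variable (R : Type*) [CommRing R] (b : ℕ)

def raneySeries (c : ℕ) : R⟦X⟧ :=
  mk fun k => (raney b c k : R)

lemma raneySeries_zero : raneySeries R b 0 = 1 := by
  ext (_ | k) <;> simp [raneySeries, coeff_one, raney_zero_succ]

lemma raneySeries_succ (c : ℕ) :
    raneySeries R b (c + 1) = raneySeries R b c + X * raneySeries R b (c + b) := by
  ext (_ | k) <;> simp [raneySeries, raney_succ_succ]

lemma raneySeries_mul (a c : ℕ) :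
    raneySeries R b a * raneySeries R b c = raneySeries R b (a + c) := by
  ext n
  induction n generalizing a c with
  | zero => simp [raneySeries, coeff_zero_eq_constantCoeff]
  | succ n ih =>
    induction c with
    | zero => simp [raneySeries_zero]
    | succ c ihc =>
      rw [raneySeries_succ, mul_add, mul_left_comm, map_add, coeff_succ_X_mul, ihc, ih,
        ← add_assoc, ← coeff_succ_X_mul n, ← map_add, ← raneySeries_succ, add_assoc]

lemma raneySeries_eq_pow (c : ℕ) : raneySeries R b c = raneySeries R b 1 ^ c := by
  induction c with
  | zero => exact raneySeries_zero R b
  | succ c ih => rw [pow_succ, ← ih, raneySeries_mul]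

lemma mk_div_mul_choose_eq_raneySeries (F : Type*) [Field F] [CharZero F] {c : ℕ} (hc : 0 < c) :
    (mk fun k : ℕ => (c : F) / (b * k + c) * ((b * k + c).choose k : ℕ)) = raneySeries F b c := by
  ext k
  simp [raneySeries, raney_eq_div_mul_choose b hc]

end RaneySeries

theorem fuss_catalan_generating_function_general (K N : ℕ) (hN : 0 < N) :
    (PowerSeries.mk fun M : ℕ =>
        (N : ℚ) / (K * M + N) * (Nat.choose (K * M + N) M)) =
      (PowerSeries.mk fun M : ℕ =>
        (1 : ℚ) / (K * M + 1) * (Nat.choose (K * M + 1) M)) ^ N := by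
  have series_one := mk_div_mul_choose_eq_raneySeries K ℚ one_pos
  rw [Nat.cast_one] at series_one
  rw [mk_div_mul_choose_eq_raneySeries K ℚ hN, series_one, raneySeries_eq_pow]

theorem fuss_catalan_generating_function (K N : ℕ) (hK : 0 < K) (hN : 0 < N) :
    (PowerSeries.mk fun M : ℕ =>
        (N : ℚ) / (K * M + N) * (Nat.choose (K * M + N) M)) =
      (PowerSeries.mk fun M : ℕ =>
        (1 : ℚ) / (K * M + 1) * (Nat.choose (K * M + 1) M)) ^ N :=
  fuss_catalan_generating_function_general K N hN
end

section
/- Let φ, θ: ℝ → ℝ with φ′ > 0 and θ′ > 0 everywhere, θ′ even, and let v₁,…,v_M be real numbers satisfying φ(v_n) + Σ_{m≠n} θ(v_n − v_m) = 2π I_n for integers I_n. If v_k > v_j then I_k > I_j, and conversely if I_k > I_j then v_k > v_j. -/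
theorem monotonicity_principle (M : ℕ) (φ θ : ℝ → ℝ)
    (hφ : Differentiable ℝ φ) (hφ' : ∀ u, 0 < deriv φ u)
    (hθ : Differentiable ℝ θ) (hθ' : ∀ u, 0 < deriv θ u)
    (heven : ∀ u, deriv θ (-u) = deriv θ u)
    (v : Fin M → ℝ) (I : Fin M → ℤ)
    (hBE : ∀ n, φ (v n) + ∑ m ∈ Finset.univ.erase n, θ (v n - v m) = 2 * Real.pi * I n) :
    ∀ j k, v k > v j ↔ I k > I j := by
  have hφm : StrictMono φ := strictMono_of_deriv_pos hφ'
  have hθm : StrictMono θ := strictMono_of_deriv_pos hθ'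
  -- key step: v j < v k → I j < I k
  have key : ∀ j k, v j < v k → I j < I k := by
    intro j k hv
    have hjk : j ≠ k := by rintro rfl; exact lt_irrefl _ hv
    have hjmem : j ∈ Finset.univ.erase k := Finset.mem_erase.2 ⟨hjk, Finset.mem_univ j⟩
    have hkmem : k ∈ Finset.univ.erase j := Finset.mem_erase.2 ⟨hjk.symm, Finset.mem_univ k⟩
    have hek : Finset.univ.erase k = insert j ((Finset.univ.erase k).erase j) :=
      (Finset.insert_erase hjmem).symm
    have hej : Finset.univ.erase j = insert k ((Finset.univ.erase j).erase k) :=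
      (Finset.insert_erase hkmem).symm
    have hcomm : (Finset.univ.erase j).erase k = (Finset.univ.erase k).erase j := by
      ext x; simp only [Finset.mem_erase, Finset.mem_univ, and_true]; tauto
    set S := (Finset.univ.erase k).erase j with hS
    have hknS : k ∉ S := fun h => (Finset.mem_erase.1 (Finset.mem_of_mem_erase h)).1 rfl
    have hjnS : j ∉ S := fun h => (Finset.mem_erase.1 h).1 rfl
    have hsumk : ∑ m ∈ Finset.univ.erase k, θ (v k - v m)
        = θ (v k - v j) + ∑ m ∈ S, θ (v k - v m) := by
      rw [hek, Finset.sum_insert hjnS]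
    have hsumj : ∑ m ∈ Finset.univ.erase j, θ (v j - v m)
        = θ (v j - v k) + ∑ m ∈ S, θ (v j - v m) := by
      rw [hej, hcomm, Finset.sum_insert hknS]
    have hlt : φ (v j) + ∑ m ∈ Finset.univ.erase j, θ (v j - v m)
        < φ (v k) + ∑ m ∈ Finset.univ.erase k, θ (v k - v m) := by
      rw [hsumj, hsumk]
      have h1 : φ (v j) < φ (v k) := hφm hv
      have h2 : θ (v j - v k) < θ (v k - v j) := hθm (by linarith)
      have h3 : ∑ m ∈ S, θ (v j - v m) ≤ ∑ m ∈ S, θ (v k - v m) :=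
        Finset.sum_le_sum fun m _ => (hθm.le_iff_le).2 (by linarith)
      linarith
    rw [hBE j, hBE k] at hlt
    have hπ : (0:ℝ) < 2 * Real.pi := by positivity
    have : (I j : ℝ) < I k := by
      have := (mul_lt_mul_iff_right₀ hπ).1 hlt
      exact this
    exact_mod_cast this
  intro j k
  constructor
  · exact key j k
  · intro hI
    rcases lt_trichotomy (v j) (v k) with h | h | h
    · exact h
    · exfalso
      have : I j = I k := by
        have hsum : ∑ m ∈ Finset.univ.erase j, θ (v j - v m)
            = ∑ m ∈ Finset.univ.erase k, θ (v k - v m) := by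
          rcases eq_or_ne j k with rfl | hjk
          · rfl
          · have hjmem : j ∈ Finset.univ.erase k := Finset.mem_erase.2 ⟨hjk, Finset.mem_univ j⟩
            have hkmem : k ∈ Finset.univ.erase j := Finset.mem_erase.2 ⟨hjk.symm, Finset.mem_univ k⟩
            have hcomm : (Finset.univ.erase j).erase k = (Finset.univ.erase k).erase j := by
              ext x; simp only [Finset.mem_erase, Finset.mem_univ, and_true]; tauto
            rw [← Finset.insert_erase hjmem, ← Finset.insert_erase hkmem, hcomm]
            have hknS : k ∉ (Finset.univ.erase k).erase j :=
              fun hm => (Finset.mem_erase.1 (Finset.mem_of_mem_erase hm)).1 rfl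
            have hjnS : j ∉ (Finset.univ.erase k).erase j := fun hm => (Finset.mem_erase.1 hm).1 rfl
            rw [Finset.sum_insert hknS, Finset.sum_insert hjnS, h]
        have : 2 * Real.pi * (I j : ℝ) = 2 * Real.pi * (I k : ℝ) := by
          rw [← hBE j, ← hBE k, hsum, h]
        have hπ : (0:ℝ) < 2 * Real.pi := by positivity
        have : (I j : ℝ) = I k := mul_left_cancel₀ (ne_of_gt hπ) this
        exact_mod_cast this
      omega
    · exact absurd (key k j h) (by omega)
end

section
/- Fix M, N, K positive integers, a = N+(M−1)K, b = −K, and let Γ ⊆ ℤ^M be the subgroup generated by the vectors γ_n (n-th coordinate a, others b). The symmetric group S_M acts on ℤ^M/Γ by permuting coordinates (well-defined since Γ is S_M-invariant), and the number of regular orbits (orbits of size M!, equivalently orbits all of whose representatives in ℤ^M have pairwise distinct coordinates) equals (N/(KM+N))·C(KM+N, M). -/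
/-!
Write `L = N + MK`. The lattice `Γ` consists of the vectors `L t - K (∑ t) 𝟙`, so the class of
`I` is determined by the differences `I m - I i₀` modulo `L` together with one residue modulo `N`,
and every such pair occurs. A class is regular exactly when its coordinates are pairwise distinct
modulo `L`, which leaves `N · L(L-1)⋯(L-M+1) / L` regular classes. The symmetric group permutes
them freely, so there are `N / L · C(L, M)` orbits.
-/

open Function

namespace RegularOrbits

theorem mem_closure_range_ite_iff {ι : Type*} [Fintype ι] [DecidableEq ι] (a b : ℤ)
    {x : ι → ℤ} :
    x ∈ AddSubgroup.closure (Set.range fun n : ι => fun m => if m = n then a else b) ↔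
      ∃ t : ι → ℤ, ∀ m, x m = (a - b) * t m + b * ∑ n, t n := by
  rw [← Submodule.span_int_eq_addSubgroupClosure, Submodule.mem_toAddSubgroup,
    Submodule.mem_span_range_iff_exists_fun]
  refine exists_congr fun t => funext_iff.trans (forall_congr' fun m => ?_)
  have coord : ∀ n, t n * (if m = n then a else b) =
      t n * b + if m = n then t n * (a - b) else 0 := fun n => by split_ifs <;> ring
  simp only [Finset.sum_apply, Pi.smul_apply, smul_eq_mul, coord, Finset.sum_add_distrib,
    Finset.sum_ite_eq, Finset.mem_univ, if_true, ← Finset.sum_mul]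
  rw [eq_comm]
  constructor <;> intro h <;> linear_combination h

theorem card_vanishing_injective_mul_card {ι G : Type*} [AddGroup G] (i : ι) :
    Nat.card {f : ι → G // f i = 0 ∧ Injective f} * Nat.card G = Nat.card (ι ↪ G) := by
  rw [← Nat.card_prod]
  refine Nat.card_congr
    { toFun := fun p => ⟨fun m => p.1.1 m + p.2, fun m n h => p.1.2.2 (add_right_cancel h)⟩
      invFun := fun e => (⟨fun m => e m - e i, sub_self _,
        fun m n h => e.injective (sub_left_injective h)⟩, e i)
      left_inv := fun ⟨⟨f, hf, _⟩, c⟩ => Prod.ext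
        (Subtype.ext (funext fun m => show f m + c - (f i + c) = f m by simp [hf]))
        (show f i + c = c by simp [hf])
      right_inv := fun e => by ext; simp }

def lattice (M N K : ℕ) : AddSubgroup (Fin M → ℤ) :=
  AddSubgroup.closure (Set.range fun n : Fin M => fun m =>
    if m = n then (N + ((M : ℤ) - 1) * K : ℤ) else (-K : ℤ))

variable {M N K : ℕ}

theorem mem_lattice_iff {x : Fin M → ℤ} :
    x ∈ lattice M N K ↔ ∃ t : Fin M → ℤ, ∀ m, x m = (N + M * K) * t m - K * ∑ n, t n := by
  rw [lattice, mem_closure_range_ite_iff]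
  refine exists_congr fun t => forall_congr' fun m => ?_
  ring_nf

theorem comp_perm_mem_lattice (σ : Equiv.Perm (Fin M)) {x : Fin M → ℤ}
    (hx : x ∈ lattice M N K) : x ∘ σ ∈ lattice M N K := by
  obtain ⟨t, ht⟩ := mem_lattice_iff.1 hx
  exact mem_lattice_iff.2 ⟨t ∘ σ, fun m => by simp [ht, Equiv.sum_comp]⟩

theorem intCast_eq_of_mem_lattice {x : Fin M → ℤ} (hx : x ∈ lattice M N K) (m n : Fin M) :
    (x m : ZMod (N + M * K)) = x n := by
  obtain ⟨t, ht⟩ := mem_lattice_iff.1 hx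
  rw [ZMod.intCast_eq_intCast_iff_dvd_sub, ht, ht]
  exact ⟨t n - t m, by push_cast; ring⟩

theorem dvd_of_mem_lattice_of_sum_eq_zero [NeZero N] {x : Fin M → ℤ}
    (hx : x ∈ lattice M N K) (hsum : ∑ m, x m = 0) (m : Fin M) : (N + M * K : ℤ) ∣ x m := by
  obtain ⟨t, ht⟩ := mem_lattice_iff.1 hx
  have hsum_t : N * ∑ n, t n = 0 := by
    simp only [ht, Finset.sum_sub_distrib, ← Finset.mul_sum, Finset.sum_const,
      Finset.card_univ, Fintype.card_fin, nsmul_eq_mul] at hsum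
    linear_combination hsum
  have ht0 : ∑ n, t n = 0 :=
    (mul_eq_zero.1 hsum_t).resolve_left (Int.natCast_ne_zero.2 (NeZero.ne N))
  exact ⟨t m, by rw [ht, ht0, mul_zero, sub_zero]⟩

theorem mul_single_sub_mem_lattice (m : Fin M) (s : ℤ) :
    (fun k => (N + M * K) * (Pi.single m s : Fin M → ℤ) k - K * s) ∈ lattice M N K :=
  mem_lattice_iff.2 ⟨Pi.single m s, fun k => by simp [Finset.sum_pi_single']⟩

def IsRegular (q : (Fin M → ℤ) ⧸ lattice M N K) : Prop :=
  ∀ I : Fin M → ℤ, QuotientAddGroup.mk' (lattice M N K) I = q → ∀ m n, m ≠ n → I m ≠ I n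

theorem isRegular_mk_iff {I : Fin M → ℤ} :
    IsRegular (I : (Fin M → ℤ) ⧸ lattice M N K) ↔
      Injective fun m => (I m : ZMod (N + M * K)) := by
  constructor
  · intro hreg m n hmn
    by_contra hne
    obtain ⟨s, hs⟩ := (ZMod.intCast_eq_intCast_iff_dvd_sub _ _ _).1 hmn
    set x : Fin M → ℤ := fun k => (N + M * K) * (Pi.single m s : Fin M → ℤ) k - K * s
    have hJ : QuotientAddGroup.mk' (lattice M N K) (I + x) = I :=
      QuotientAddGroup.eq.2 (by simpa using neg_mem (mul_single_sub_mem_lattice m s))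
    refine hreg _ hJ m n hne ?_
    simp only [x, Pi.add_apply, Pi.single_eq_same, Pi.single_eq_of_ne (Ne.symm hne)]
    push_cast at hs
    linear_combination -hs
  · rintro hinj J hJ m n hmn hJ_eq
    have hx := QuotientAddGroup.eq.1 hJ
    refine hmn (hinj ?_)
    have := intCast_eq_of_mem_lattice hx m n
    simp only [Pi.add_apply, Pi.neg_apply, Int.cast_add, Int.cast_neg, hJ_eq] at this
    linear_combination this

instance : MulAction (Equiv.Perm (Fin M)) ((Fin M → ℤ) ⧸ lattice M N K) where
  smul σ := QuotientAddGroup.map (lattice M N K) (lattice M N K)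
    (LinearMap.funLeft ℤ ℤ σ.symm).toAddMonoidHom fun _ hx => comp_perm_mem_lattice σ.symm hx
  one_smul q := QuotientAddGroup.induction_on q fun _ => rfl
  mul_smul _ _ q := QuotientAddGroup.induction_on q fun _ => rfl

theorem perm_smul_mk (σ : Equiv.Perm (Fin M)) (I : Fin M → ℤ) :
    σ • (I : (Fin M → ℤ) ⧸ lattice M N K) =
      ((I ∘ σ.symm : Fin M → ℤ) : (Fin M → ℤ) ⧸ lattice M N K) :=
  rfl

variable (M N K) in
def regular : SubMulAction (Equiv.Perm (Fin M)) ((Fin M → ℤ) ⧸ lattice M N K) where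
  carrier := {q | IsRegular q}
  smul_mem' σ q := QuotientAddGroup.induction_on q fun I hI => by
    simp only [Set.mem_ofPred_eq, perm_smul_mk, isRegular_mk_iff] at hI ⊢
    exact hI.comp σ.symm.injective

theorem stabilizer_regular_eq_bot [NeZero N] (q : regular M N K) :
    MulAction.stabilizer (Equiv.Perm (Fin M)) q = ⊥ := by
  obtain ⟨q, hq⟩ := q
  induction q using QuotientAddGroup.induction_on with | H I => ?_
  have hinj : Injective fun m => (I m : ZMod (N + M * K)) := isRegular_mk_iff.1 hq
  refine (Subgroup.eq_bot_iff_forall _).2 fun σ hσ => ?_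
  rw [MulAction.mem_stabilizer_iff, Subtype.ext_iff, SubMulAction.val_smul, perm_smul_mk,
    eq_comm, QuotientAddGroup.eq] at hσ
  have hsum : ∑ m, (-I + I ∘ σ.symm) m = 0 := by
    simp [Finset.sum_add_distrib, Equiv.sum_comp]
  refine inv_eq_one.1 <| Equiv.ext fun m =>
    hinj ((ZMod.intCast_eq_intCast_iff_dvd_sub _ _ _).2 ?_).symm
  simpa [neg_add_eq_sub] using dvd_of_mem_lattice_of_sum_eq_zero hσ hsum m

theorem card_regular_eq_card_orbits_mul [NeZero N] :
    Nat.card (regular M N K) =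
      Nat.card (MulAction.orbitRel.Quotient (Equiv.Perm (Fin M)) (regular M N K)) *
        M.factorial := by
  rw [Nat.card_congr (MulAction.selfEquivOrbitsQuotientProd stabilizer_regular_eq_bot),
    Nat.card_prod, Nat.card_perm, Nat.card_fin]

variable (N K) in
/-- Subtracting the lattice vector with `t = (I - I i₀) / L` brings all differences into `[0, L)`
and moves `I i₀` to the second component, which is only defined modulo `N` because
`N 𝟙 = ∑ₙ (L eₙ - K 𝟙) ∈ Γ`. -/
def invariant (i₀ : Fin M) (I : Fin M → ℤ) : (Fin M → ZMod (N + M * K)) × ZMod N :=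
  (fun m => ((I m - I i₀ : ℤ) : ZMod (N + M * K)),
    ((I i₀ + K * ∑ m, (I m - I i₀) / (N + M * K : ℤ) : ℤ) : ZMod N))

theorem invariant_fst_eq_iff (i₀ : Fin M) {I J : Fin M → ℤ} :
    (invariant N K i₀ I).1 = (invariant N K i₀ J).1 ↔
      ∃ u : Fin M → ℤ, ∀ m, J m - J i₀ = I m - I i₀ + (N + M * K) * u m := by
  simp only [invariant, funext_iff, ZMod.intCast_eq_intCast_iff_dvd_sub, Nat.cast_add,
    Nat.cast_mul, dvd_iff_exists_eq_mul_right, sub_eq_iff_eq_add']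
  exact Classical.skolem

theorem invariant_snd_eq_iff [NeZero N] (i₀ : Fin M) {I J u : Fin M → ℤ}
    (hu : ∀ m, J m - J i₀ = I m - I i₀ + (N + M * K) * u m) :
    (invariant N K i₀ I).2 = (invariant N K i₀ J).2 ↔
      (N : ℤ) ∣ J i₀ - I i₀ + K * ∑ m, u m := by
  have hL : (N + M * K : ℤ) ≠ 0 := by
    have := NeZero.pos N
    positivity
  have hdiv : ∀ m, (J m - J i₀) / (N + M * K : ℤ) = (I m - I i₀) / (N + M * K) + u m :=
    fun m => by rw [hu, Int.add_mul_ediv_left _ _ hL]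
  simp only [invariant, ZMod.intCast_eq_intCast_iff_dvd_sub]
  simp only [hdiv, Finset.sum_add_distrib]
  exact Iff.of_eq (congrArg _ (by ring))

theorem invariant_eq_iff [NeZero N] (i₀ : Fin M) {I J : Fin M → ℤ} :
    invariant N K i₀ I = invariant N K i₀ J ↔ -I + J ∈ lattice M N K := by
  rw [Prod.ext_iff, invariant_fst_eq_iff, mem_lattice_iff]
  constructor
  · rintro ⟨⟨u, hu⟩, hsnd⟩
    obtain ⟨s, hs⟩ := (invariant_snd_eq_iff i₀ hu).1 hsnd
    refine ⟨u + fun _ => s, fun m => ?_⟩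
    simp only [Pi.add_apply, Pi.neg_apply, Finset.sum_add_distrib, Finset.sum_const,
      Finset.card_univ, Fintype.card_fin, nsmul_eq_mul]
    linear_combination hu m + hs
  · rintro ⟨t, ht⟩
    simp only [Pi.add_apply, Pi.neg_apply] at ht
    have hu : ∀ m, J m - J i₀ = I m - I i₀ + (N + M * K) * (t m - t i₀) := fun m => by
      linear_combination ht m - ht i₀
    refine ⟨⟨_, hu⟩, (invariant_snd_eq_iff i₀ hu).2 ⟨t i₀, ?_⟩⟩
    simp only [Finset.sum_sub_distrib, Finset.sum_const, Finset.card_univ, Fintype.card_fin,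
      nsmul_eq_mul]
    linear_combination ht i₀

theorem invariant_val_add_val [NeZero N] (i₀ : Fin M) {f : Fin M → ZMod (N + M * K)}
    (hf : f i₀ = 0) (c : ZMod N) :
    invariant N K i₀ (fun m => c.val + (f m).val) = (f, c) := by
  have hdiff : ∀ m, ((c.val : ℤ) + (f m).val) - ((c.val : ℤ) + (f i₀).val) = (f m).val := by
    simp [hf]
  have hdiv : ∀ m, ((f m).val : ℤ) / (N + M * K : ℤ) = 0 := fun m =>
    Int.ediv_eq_zero_of_lt (by positivity) (by exact_mod_cast (f m).val_lt)
  simp only [invariant, hdiff]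
  simp only [hdiv, Finset.sum_const_zero, mul_zero, add_zero, hf, ZMod.val_zero, Nat.cast_zero,
    Int.cast_natCast, ZMod.natCast_zmod_val]

variable (N K) in
def classInvariant [NeZero N] (i₀ : Fin M) :
    (Fin M → ℤ) ⧸ lattice M N K → (Fin M → ZMod (N + M * K)) × ZMod N :=
  Quotient.lift (invariant N K i₀) fun _ _ h =>
    (invariant_eq_iff i₀).2 (QuotientAddGroup.leftRel_apply.1 h)

theorem classInvariant_injective [NeZero N] (i₀ : Fin M) :
    Injective (classInvariant N K i₀) := by
  intro q q' h
  induction q using QuotientAddGroup.induction_on with | H I => ?_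
  induction q' using QuotientAddGroup.induction_on with | H J => ?_
  exact QuotientAddGroup.eq.2 ((invariant_eq_iff i₀).1 h)

theorem classInvariant_fst_self [NeZero N] (i₀ : Fin M) (q : (Fin M → ℤ) ⧸ lattice M N K) :
    (classInvariant N K i₀ q).1 i₀ = 0 :=
  QuotientAddGroup.induction_on q fun _ => by simp [classInvariant, invariant]

theorem isRegular_iff_injective_classInvariant [NeZero N] (i₀ : Fin M)
    (q : (Fin M → ℤ) ⧸ lattice M N K) :
    IsRegular q ↔ Injective (classInvariant N K i₀ q).1 := by
  induction q using QuotientAddGroup.induction_on with | H I => ?_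
  rw [isRegular_mk_iff]
  refine ((sub_left_injective (b := (I i₀ : ZMod (N + M * K)))).of_comp_iff _).symm.trans ?_
  simp [classInvariant, invariant, comp_def]

theorem card_regular_eq_card_injective_mul [NeZero N] (i₀ : Fin M) :
    Nat.card (regular M N K) =
      Nat.card {f : Fin M → ZMod (N + M * K) // f i₀ = 0 ∧ Injective f} * N := by
  let Φ : regular M N K → {f : Fin M → ZMod (N + M * K) // f i₀ = 0 ∧ Injective f} × ZMod N :=
    fun q => (⟨(classInvariant N K i₀ q).1,
      classInvariant_fst_self i₀ q.1,
      (isRegular_iff_injective_classInvariant i₀ q.1).1 q.2⟩, (classInvariant N K i₀ q).2)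
  have hΦ : Bijective Φ := by
    refine ⟨fun q q' h => Subtype.ext (classInvariant_injective i₀ ?_), ?_⟩
    · exact Prod.ext (congrArg (fun p => p.1.1) h) (congrArg (fun p => p.2) h :)
    · rintro ⟨⟨f, hf, hinj⟩, c⟩
      let I : (Fin M → ℤ) ⧸ lattice M N K := (fun m => c.val + (f m).val : Fin M → ℤ)
      have hI : classInvariant N K i₀ I = (f, c) := invariant_val_add_val i₀ hf c
      refine ⟨⟨I, (isRegular_iff_injective_classInvariant i₀ I).2 (by rwa [hI])⟩, ?_⟩
      exact Prod.ext (Subtype.ext (congrArg Prod.fst hI)) (congrArg Prod.snd hI :)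
  rw [Nat.card_eq_of_bijective Φ hΦ, Nat.card_prod, Nat.card_zmod]

theorem orbitRel_regular_iff {q q' : regular M N K} :
    MulAction.orbitRel (Equiv.Perm (Fin M)) (regular M N K) q q' ↔
      ∃ σ : Equiv.Perm (Fin M), ∃ I : Fin M → ℤ,
        QuotientAddGroup.mk' (lattice M N K) I = q.1 ∧
          QuotientAddGroup.mk' (lattice M N K) (I ∘ σ) = q'.1 := by
  obtain ⟨q, hq⟩ := q
  obtain ⟨q', hq'⟩ := q'
  simp only [MulAction.orbitRel_apply, MulAction.mem_orbit_iff, Subtype.ext_iff,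
    SubMulAction.val_smul, QuotientAddGroup.mk'_apply]
  constructor
  · rintro ⟨σ, rfl⟩
    induction q' using QuotientAddGroup.induction_on with | H I => ?_
    exact ⟨σ, I ∘ σ.symm, rfl, by simp [comp_assoc]⟩
  · rintro ⟨σ, I, rfl, rfl⟩
    exact ⟨σ, by simp [perm_smul_mk, comp_assoc]⟩

theorem card_orbits_mul_modulus [NeZero N] (hM : 0 < M) :
    Nat.card (MulAction.orbitRel.Quotient (Equiv.Perm (Fin M)) (regular M N K)) * (N + M * K) =
      N * (N + M * K).choose M := by
  have hembed := card_vanishing_injective_mul_card (G := ZMod (N + M * K)) (⟨0, hM⟩ : Fin M)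
  rw [Nat.card_zmod, Nat.card_eq_fintype_card (α := _ ↪ _), Fintype.card_embedding_eq, ZMod.card,
    Fintype.card_fin, Nat.descFactorial_eq_factorial_mul_choose] at hembed
  refine Nat.eq_of_mul_eq_mul_left M.factorial_pos ?_
  calc M.factorial * (Nat.card _ * (N + M * K))
      = Nat.card (regular M N K) * (N + M * K) := by
        rw [card_regular_eq_card_orbits_mul]; ring
    _ = M.factorial * (N * (N + M * K).choose M) := by
      rw [card_regular_eq_card_injective_mul ⟨0, hM⟩, mul_right_comm, hembed]; ring

end RegularOrbits

theorem count_regular_orbits_general (M N K : ℕ) (hM : 0 < M) (hN : 0 < N) :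
    let a : ℤ := N + ((M : ℤ) - 1) * K
    let b : ℤ := -K
    let Γ : AddSubgroup (Fin M → ℤ) :=
      AddSubgroup.closure (Set.range fun n : Fin M => fun m => if m = n then a else b)
    -- an equivalence class is regular if all its representatives have pairwise
    -- distinct coordinates
    let Regular : ((Fin M → ℤ) ⧸ Γ) → Prop := fun q =>
      ∀ I : Fin M → ℤ, QuotientAddGroup.mk' Γ I = q → ∀ m n, m ≠ n → I m ≠ I n
    -- the permutation group acts by permuting coordinates; two regular classes are
    -- in the same orbit iff some permutation maps one to the other
    let rel : {q : (Fin M → ℤ) ⧸ Γ // Regular q} → {q : (Fin M → ℤ) ⧸ Γ // Regular q} → Prop :=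
      fun q q' => ∃ σ : Equiv.Perm (Fin M), ∃ I : Fin M → ℤ,
        QuotientAddGroup.mk' Γ I = q.1 ∧ QuotientAddGroup.mk' Γ (I ∘ σ) = q'.1
    (Nat.card (Quot rel) : ℚ) = (N : ℚ) / (K * M + N) * (Nat.choose (K * M + N) M) := by
  intro a b Γ Regular rel
  have : NeZero N := ⟨hN.ne'⟩
  have horbits : Nat.card (Quot rel) =
      Nat.card (MulAction.orbitRel.Quotient (Equiv.Perm (Fin M)) (RegularOrbits.regular M N K)) :=
    Nat.card_congr (Quot.congrRight fun _ _ => RegularOrbits.orbitRel_regular_iff.symm)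
  have hcount := RegularOrbits.card_orbits_mul_modulus (N := N) (K := K) hM
  have hL : (K : ℚ) * M + N = ((N + M * K : ℕ) : ℚ) := by push_cast; ring
  rw [horbits, hL, show K * M + N = N + M * K by ring, div_mul_eq_mul_div,
    eq_div_iff (by positivity)]
  exact_mod_cast hcount

theorem count_regular_orbits (M N K : ℕ) (hM : 0 < M) (hN : 0 < N) (hK : 0 < K) :
    let a : ℤ := N + ((M : ℤ) - 1) * K
    let b : ℤ := -K
    let Γ : AddSubgroup (Fin M → ℤ) :=
      AddSubgroup.closure (Set.range fun n : Fin M => fun m => if m = n then a else b)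
    -- an equivalence class is regular if all its representatives have pairwise
    -- distinct coordinates
    let Regular : ((Fin M → ℤ) ⧸ Γ) → Prop := fun q =>
      ∀ I : Fin M → ℤ, QuotientAddGroup.mk' Γ I = q → ∀ m n, m ≠ n → I m ≠ I n
    -- the permutation group acts by permuting coordinates; two regular classes are
    -- in the same orbit iff some permutation maps one to the other
    let rel : {q : (Fin M → ℤ) ⧸ Γ // Regular q} → {q : (Fin M → ℤ) ⧸ Γ // Regular q} → Prop :=
      fun q q' => ∃ σ : Equiv.Perm (Fin M), ∃ I : Fin M → ℤ,
        QuotientAddGroup.mk' Γ I = q.1 ∧ QuotientAddGroup.mk' Γ (I ∘ σ) = q'.1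
    (Nat.card (Quot rel) : ℚ) = (N : ℚ) / (K * M + N) * (Nat.choose (K * M + N) M) :=
  count_regular_orbits_general M N K hM hN
end

section
/- For M, N, K positive integers, the number of strictly increasing integer sequences I₁ < I₂ < ⋯ < I_M satisfying, for every r = 1,…,M, the inequalities r(r−1)K/2 ≤ I₁+⋯+I_r and I_{M−r+1}+⋯+I_M ≤ rMK − r(r+1)K/2 + rN − 1, equals (N/(KM+N))·C(KM+N, M). -/
/-!
Extend a tuple `I` to the strictly increasing sequence `q : ℤ → ℤ` with `q (j + M) = q j + n`,
`n = K * M + N`, that agrees with `I` on `[0, M)`. The two families of inequalities say exactly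
that the walk with steps `q j - K * j` takes its first global minimum at `0`. Because these steps
satisfy `f (j + M) = f j + N` with `N > 0`, the walk grows quadratically in both directions, so
the walk of `q j - K * j - θ` has a first global minimum for every shift `θ`.

Cycle lemma: cutting a normalized sequence (an `M`-subset of `ℤ / n`) at the first minimum of
its `θ`-shifted walk, for `θ ∈ [0, N)`, and remembering the value shift modulo `n`, is a
bijection onto pairs of a tuple satisfying the inequalities and a residue in `[0, n)`. Hence
`n * #tuples = N * (n choose M)`.
-/

open Finset

namespace FussCatalan

noncomputable section

def IsQuasiPeriodic (M n : ℤ) (q : ℤ → ℤ) : Prop :=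
  ∀ j, q (j + M) = q j + n

section QuasiPeriodic

variable {M n : ℤ} {q : ℤ → ℤ}

lemma IsQuasiPeriodic.add_mul (hq : IsQuasiPeriodic M n q) (j t : ℤ) :
    q (j + t * M) = q j + t * n := by
  induction t using Int.induction_on with
  | zero => simp
  | succ t ih => rw [add_one_mul, ← add_assoc, hq, ih]; ring
  | pred t ih =>
    have := hq (j + (-t - 1) * M)
    rw [show j + (-t - 1) * M + M = j + -t * M by ring, ih] at this
    linarith

lemma IsQuasiPeriodic.comp_add_add (hq : IsQuasiPeriodic M n q) (c v : ℤ) :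
    IsQuasiPeriodic M n fun j => q (j + c) + v := fun j => by
  simp only [add_right_comm j M c, hq (j + c)]; ring

lemma IsQuasiPeriodic.strictMono (hq : IsQuasiPeriodic M n q) (hM : 0 < M)
    (h : ∀ a, 0 ≤ a → a < M → q a < q (a + 1)) : StrictMono q := by
  refine strictMono_int_of_lt_succ fun j => ?_
  have hj := Int.mul_ediv_add_emod j M
  have h₁ := hq.add_mul (j % M) (j / M)
  have h₂ := hq.add_mul (j % M + 1) (j / M)
  rw [show j % M + j / M * M = j by linarith] at h₁
  rw [show j % M + 1 + j / M * M = j + 1 by linarith] at h₂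
  linarith [h (j % M) (Int.emod_nonneg j hM.ne') (Int.emod_lt_of_pos j hM)]

end QuasiPeriodic

def walk (f : ℤ → ℤ) (m : ℤ) : ℤ :=
  ∑ j ∈ Ico 0 m, f j - ∑ j ∈ Ico m 0, f j

@[simp] lemma walk_zero (f : ℤ → ℤ) : walk f 0 = 0 := by simp [walk]

lemma walk_add_one (f : ℤ → ℤ) (m : ℤ) : walk f (m + 1) = walk f m + f m := by
  rcases le_or_gt 0 m with h | h
  · rw [walk, walk, Ico_eq_empty_of_le (show (0 : ℤ) ≤ m + 1 by omega), Ico_eq_empty_of_le h,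
      ← sum_Ico_add_eq_sum_Ico_add_one h]
    simp
  · rw [walk, walk, Ico_eq_empty_of_le h.le, Ico_eq_empty_of_le (Int.add_one_le_of_lt h),
      ← insert_Ico_add_one_left_eq_Ico h, sum_insert (by simp)]
    ring

lemma eq_add_walk {f g : ℤ → ℤ} (h : ∀ m, g (m + 1) = g m + f m) (m : ℤ) :
    g m = g 0 + walk f m := by
  induction m using Int.induction_on with
  | zero => simp
  | succ k ih => rw [h, walk_add_one, ih]; ring
  | pred k ih =>
    have h₁ := h (-k - 1)
    have h₂ := walk_add_one f (-k - 1)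
    rw [sub_add_cancel] at h₁ h₂
    linarith

lemma walk_comp_add_right (f : ℤ → ℤ) (c m : ℤ) :
    walk (fun j => f (j + c)) m = walk f (m + c) - walk f c := by
  have := eq_add_walk (f := fun j => f (j + c)) (g := fun m => walk f (m + c))
    (fun m => by rw [add_right_comm, walk_add_one]) m
  simp only [zero_add] at this
  omega

lemma walk_const (c m : ℤ) : walk (fun _ => c) m = c * m := by
  simpa using (eq_add_walk (f := fun _ => c) (g := fun m => c * m) (fun m => by ring) m).symm

lemma walk_add_sub_walk {f : ℤ → ℤ} {M N : ℤ} (hf : IsQuasiPeriodic M N f) (m : ℤ) :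
    walk f (m + M) - walk f m = walk f M + N * m := by
  have := eq_add_walk (f := fun _ => N) (g := fun m => walk f (m + M) - walk f m)
    (fun m => by rw [add_right_comm, walk_add_one, walk_add_one, hf]; ring) m
  simpa [walk_const] using this

def IsFirstMin (g : ℤ → ℤ) (i : ℤ) : Prop :=
  IsLeast {m | ∀ k, g m ≤ g k} i

lemma isFirstMin_iff {g : ℤ → ℤ} {i : ℤ} :
    IsFirstMin g i ↔ (∀ k, g i ≤ g k) ∧ ∀ m < i, g i < g m := by
  refine ⟨fun ⟨hmin, hleast⟩ => ⟨hmin, fun m hm => ?_⟩,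
    fun ⟨hmin, hfirst⟩ => ⟨hmin, fun m hm => ?_⟩⟩
  · by_contra! h
    exact (hleast fun k => h.trans (hmin k)).not_gt hm
  · by_contra! h
    exact (hfirst m h).not_ge (hm i)

lemma isFirstMin_walk_comp_add_right {f : ℤ → ℤ} {c i : ℤ} :
    IsFirstMin (walk fun j => f (j + c)) i ↔ IsFirstMin (walk f) (i + c) := by
  simp only [isFirstMin_iff, walk_comp_add_right, sub_le_sub_iff_right, sub_lt_sub_iff_right]
  refine ⟨fun ⟨hmin, hfirst⟩ => ⟨fun k => ?_, fun m hm => ?_⟩,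
    fun ⟨hmin, hfirst⟩ => ⟨fun k => hmin _, fun m hm => hfirst _ (by omega)⟩⟩
  · simpa using hmin (k - c)
  · simpa using hfirst (m - c) (by omega)

lemma le_of_base_of_step_up {g : ℤ → ℤ} {M a c : ℤ} (hM : 0 < M)
    (hstep : ∀ m, a ≤ m → g m ≤ g (m + M)) (hbase : ∀ m, a ≤ m → m < a + M → c ≤ g m) :
    ∀ m, a ≤ m → c ≤ g m := by
  intro m
  induction m using Int.strongRec (m := a + M) with
  | lt m hm => exact fun ha => hbase m ha hm
  | ge m hm ih =>
    intro _
    calc c ≤ g (m - M) := ih (m - M) (by omega) (by omega)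
      _ ≤ g (m - M + M) := hstep _ (by omega)
      _ = g m := by rw [sub_add_cancel]

lemma le_of_base_of_step_down {g : ℤ → ℤ} {M a c : ℤ} (hM : 0 < M)
    (hstep : ∀ m, m ≤ a → g m ≤ g (m - M)) (hbase : ∀ m, a - M < m → m ≤ a → c ≤ g m) :
    ∀ m, m ≤ a → c ≤ g m := by
  intro m hm
  simpa using le_of_base_of_step_up (g := fun m => g (-m)) (a := -a) hM
    (fun m hm => by simpa [neg_add, sub_eq_add_neg, add_comm] using hstep (-m) (by omega))
    (fun m h₁ h₂ => hbase (-m) (by omega) (by omega)) (-m) (by omega)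

lemma isFirstMin_of_window {g : ℤ → ℤ} {M i : ℤ} (hM : 0 < M)
    (hinc : Monotone fun m => g (m + M) - g m)
    (hwin : ∀ r, 1 ≤ r → r ≤ M → g i ≤ g (i + r) ∧ g i < g (i - r)) : IsFirstMin g i := by
  -- `r = M` makes the `M`-step increments `≥ 0` from `i` on and `< 0` up to `i - M`, which
  -- propagates the window inequalities to all of `ℤ`.
  have hup := le_of_base_of_step_up (g := g) (a := i + 1) (c := g i) hM
    (fun m hm => by linarith [hinc (show i ≤ m by omega), (hwin M hM le_rfl).1])
    (fun m h₁ h₂ => by simpa using (hwin (m - i) (by omega) (by omega)).1)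
  have hdown := le_of_base_of_step_down (g := g) (a := i - 1) (c := g i + 1) hM
    (fun m hm => by
      have := hinc (show m - M ≤ i - M by omega)
      simp only [sub_add_cancel] at this
      linarith [(hwin M hM le_rfl).2])
    (fun m h₁ h₂ => by simpa using (hwin (i - m) (by omega) (by omega)).2)
  refine isFirstMin_iff.2 ⟨fun k => ?_, fun m hm => hdown m (by omega)⟩
  rcases lt_trichotomy k i with h | rfl | h
  · linarith [hdown k (by omega)]
  · exact le_rfl
  · exact hup k h

lemma _root_.StrictMono.add_sub_le_int {f : ℤ → ℤ} (hf : StrictMono f) {a b : ℤ} (h : a ≤ b) :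
    f a + (b - a) ≤ f b := by
  induction b, h using Int.leInduction with
  | base => simp
  | succ b _ ih => linarith [hf (lt_add_one b)]

lemma exists_isFirstMin {g : ℤ → ℤ} {M : ℤ} (hM : 0 < M)
    (hinc : StrictMono fun m => g (m + M) - g m) : ∃ i, IsFirstMin g i := by
  set B := |g M - g 0| + 1
  have hB : 0 < B := by positivity
  have hup : ∀ m, B ≤ m → g m ≤ g (m + M) := fun m hm => by
    have := hinc.add_sub_le_int (show 0 ≤ m by omega)
    simp only [zero_add] at this
    linarith [neg_abs_le (g M - g 0)]
  have hdown : ∀ m, m ≤ -B → g (m + M) < g m := fun m hm => by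
    have := hinc.add_sub_le_int (show m ≤ 0 by omega)
    simp only [zero_add] at this
    linarith [le_abs_self (g M - g 0)]
  -- Outside `[-B, B]` the `M`-step increments point back towards `[-B - M, B + M]`, so the minimum
  -- over this interval is global, and no minimizer lies at or below `-B`.
  have hF : (Icc (-B - M) (B + M)).Nonempty := nonempty_Icc.2 (by omega)
  obtain ⟨i₀, hi₀, hμ⟩ := exists_mem_eq_inf' hF g
  have hbase : ∀ m, -B - M ≤ m → m ≤ B + M → g i₀ ≤ g m := fun m h₁ h₂ =>
    hμ ▸ inf'_le g (mem_Icc.2 ⟨h₁, h₂⟩)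
  have hmin : ∀ k, g i₀ ≤ g k := fun k => by
    rcases le_or_gt B k with hk | hk
    · exact le_of_base_of_step_up hM hup (fun m h₁ h₂ => hbase m (by omega) (by omega)) k hk
    rcases le_or_gt k (-B) with hk' | hk'
    · exact le_of_base_of_step_down hM
        (fun m hm => by simpa using (hdown (m - M) (by omega)).le)
        (fun m h₁ h₂ => hbase m (by omega) (by omega)) k hk'
    · exact hbase k (by omega) (by omega)
  obtain ⟨i, hi, hleast⟩ := Int.exists_least_of_bdd (P := fun m => ∀ k, g m ≤ g k)
    ⟨-B, fun m hm => by by_contra! h; exact (hdown m h.le).not_ge (hm _)⟩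
    ⟨i₀, hmin⟩
  exact ⟨i, hi, hleast⟩

lemma isLeast_setOf_comp_add_right {P : ℤ → Prop} {c i : ℤ} :
    IsLeast {j | P (j + c)} i ↔ IsLeast {j | P j} (i + c) := by
  refine ⟨fun ⟨hi, hleast⟩ => ⟨hi, fun m hm => ?_⟩,
    fun ⟨hi, hleast⟩ => ⟨hi, fun m hm => by simpa using hleast hm⟩⟩
  have := @hleast (m - c) (by simpa using hm)
  omega

lemma isLeast_sInf_setOf_nonneg {q : ℤ → ℤ} (hq : StrictMono q) :
    IsLeast {j | 0 ≤ q j} (sInf {j | 0 ≤ q j}) := by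
  obtain ⟨e, he, hleast⟩ := Int.exists_least_of_bdd (P := fun j => 0 ≤ q j)
    ⟨-|q 0|, fun j hj => by
      by_contra! h
      linarith [hq.add_sub_le_int (show j ≤ 0 by linarith [abs_nonneg (q 0)]), le_abs_self (q 0)]⟩
    ⟨|q 0|, by linarith [hq.add_sub_le_int (abs_nonneg (q 0)), neg_abs_le (q 0)]⟩
  have he' : IsLeast {j | 0 ≤ q j} e := ⟨he, hleast⟩
  rwa [he'.csInf_eq]

lemma isLeast_setOf_nonneg_zero_iff {q : ℤ → ℤ} (hq : Monotone q) :
    IsLeast {j | 0 ≤ q j} 0 ↔ q (-1) < 0 ∧ 0 ≤ q 0 := by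
  refine ⟨fun ⟨h0, hleast⟩ => ⟨?_, h0⟩, fun ⟨hneg, h0⟩ => ⟨h0, fun j hj => ?_⟩⟩
  · by_contra! h
    exact absurd (hleast h) (by norm_num)
  · by_contra! h
    exact (hneg.trans_le' (hq (show j ≤ -1 by omega))).not_ge hj

def step (K θ : ℤ) (q : ℤ → ℤ) (j : ℤ) : ℤ :=
  q j - K * j - θ

/-- Cut `q` at the first minimum `i` of its walk and lower its values by `θ + K * i`, so that the
walk of the result is the old walk seen from `i`; the second component remembers the lowering
modulo `n`. -/
def rotate (K n : ℤ) (q : ℤ → ℤ) (θ : ℤ) : (ℤ → ℤ) × ℤ :=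
  let i := sInf {m | ∀ k, walk (step K θ q) m ≤ walk (step K θ q) k}
  (fun j => q (j + i) - (θ + K * i), (θ + K * i) % n)

/-- The cut point is recovered as the first index where `q + s` becomes nonnegative. -/
def unrotate (K N : ℤ) (q : ℤ → ℤ) (s : ℤ) : (ℤ → ℤ) × ℤ :=
  let e := sInf {j | 0 ≤ q j + s}
  (fun j => q (j + e) + s, (s + K * e) % N)

/-- `q` enumerates an `M`-subset of `[0, n)` together with its translates by multiples of `n`,
starting from its least nonnegative element. -/
def normalizedSeqs (M n : ℤ) : Set (ℤ → ℤ) :=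
  {q | StrictMono q ∧ IsQuasiPeriodic M n q ∧ IsLeast {j | 0 ≤ q j} 0}

def balancedSeqs (M K N : ℤ) : Set (ℤ → ℤ) :=
  {q | StrictMono q ∧ IsQuasiPeriodic M (K * M + N) q ∧ IsFirstMin (walk (step K 0 q)) 0}

section Rotation

variable {M K N θ s i e : ℤ} {q : ℤ → ℤ}

lemma IsQuasiPeriodic.step (hq : IsQuasiPeriodic M (K * M + N) q) (θ : ℤ) :
    IsQuasiPeriodic M N (step K θ q) := fun j => by
  simp only [FussCatalan.step, hq j]; ring

lemma exists_isFirstMin_walk_step (hM : 0 < M) (hN : 0 < N)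
    (hq : IsQuasiPeriodic M (K * M + N) q) (θ : ℤ) : ∃ i, IsFirstMin (walk (step K θ q)) i :=
  exists_isFirstMin hM <| by
    simp_rw [walk_add_sub_walk (hq.step θ)]
    exact (strictMono_mul_left_of_pos hN).const_add _

lemma rotate_eq (n : ℤ) (hi : IsFirstMin (walk (step K θ q)) i) :
    rotate K n q θ = (fun j => q (j + i) - (θ + K * i), (θ + K * i) % n) := by
  simp only [rotate, IsLeast.csInf_eq hi]

lemma unrotate_eq (he : IsLeast {j | 0 ≤ q j + s} e) :
    unrotate K N q s = (fun j => q (j + e) + s, (s + K * e) % N) := by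
  simp only [unrotate, IsLeast.csInf_eq he]

lemma mapsTo_rotate (hM : 0 < M) (hN : 0 < N) (hn : 0 < K * M + N) :
    Set.MapsTo (fun p => rotate K (K * M + N) p.1 p.2)
      (normalizedSeqs M (K * M + N) ×ˢ Set.Ico 0 N)
      (balancedSeqs M K N ×ˢ Set.Ico 0 (K * M + N)) := by
  rintro ⟨q, θ⟩ ⟨⟨hmono, hqp, -⟩, -⟩
  obtain ⟨i, hi⟩ := exists_isFirstMin_walk_step hM hN hqp θ
  have hstep : step K 0 (fun j => q (j + i) - (θ + K * i)) = fun j => step K θ q (j + i) := by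
    funext j; simp only [step]; ring
  simp only [Set.mem_prod, rotate_eq _ hi]
  refine ⟨⟨fun a b h => by simpa using hmono (add_lt_add_left h i), ?_, ?_⟩,
    Int.emod_nonneg _ hn.ne', Int.emod_lt_of_pos _ hn⟩
  · simpa [sub_eq_add_neg] using hqp.comp_add_add i (-(θ + K * i))
  · rw [hstep, isFirstMin_walk_comp_add_right, zero_add]
    exact hi

lemma mapsTo_unrotate (hN : 0 < N) :
    Set.MapsTo (fun p => unrotate K N p.1 p.2)
      (balancedSeqs M K N ×ˢ Set.Ico 0 (K * M + N))
      (normalizedSeqs M (K * M + N) ×ˢ Set.Ico 0 N) := by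
  rintro ⟨q, s⟩ ⟨⟨hmono, hqp, -⟩, -⟩
  have he := isLeast_sInf_setOf_nonneg (hmono.add_const s)
  simp only [Set.mem_prod, unrotate_eq he]
  refine ⟨⟨fun a b h => by simpa using hmono (add_lt_add_left h _), hqp.comp_add_add _ _, ?_⟩,
    Int.emod_nonneg _ hN.ne', Int.emod_lt_of_pos _ hN⟩
  exact (isLeast_setOf_comp_add_right (P := fun j => 0 ≤ q j + s)).2 (by rwa [zero_add])

lemma unrotate_rotate (hM : 0 < M) (hN : 0 < N) (hq : q ∈ normalizedSeqs M (K * M + N))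
    (hθ : θ ∈ Set.Ico 0 N) :
    unrotate K N (rotate K (K * M + N) q θ).1 (rotate K (K * M + N) q θ).2 = (q, θ) := by
  obtain ⟨hmono, hqp, h0⟩ := hq
  obtain ⟨i, hi⟩ := exists_isFirstMin_walk_step hM hN hqp θ
  rw [rotate_eq _ hi]
  have hdiv := Int.mul_ediv_add_emod (θ + K * i) (K * M + N)
  set t := (θ + K * i) / (K * M + N)
  have hshift : ∀ j, q (j + i) - (θ + K * i) + (θ + K * i) % (K * M + N) =
      q (j + (i - t * M)) := fun j => by
    rw [show j + (i - t * M) = j + i + -t * M by ring, hqp.add_mul]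
    linear_combination hdiv
  have he : IsLeast {j | 0 ≤ q (j + i) - (θ + K * i) + (θ + K * i) % (K * M + N)}
      (t * M - i) := by
    simp only [hshift]
    exact isLeast_setOf_comp_add_right.2 (by rwa [show t * M - i + (i - t * M) = 0 by ring])
  rw [unrotate_eq he, Prod.ext_iff]
  refine ⟨funext fun j => ?_, ?_⟩
  · simp only [hshift, show j + (t * M - i) + (i - t * M) = j by ring]
  · simp only
    rw [show (θ + K * i) % (K * M + N) + K * (t * M - i) = θ + N * -t by linear_combination hdiv,
      Int.add_mul_emod_self_left, Int.emod_eq_of_lt hθ.1 hθ.2]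

lemma rotate_unrotate (hq : q ∈ balancedSeqs M K N) (hs : s ∈ Set.Ico 0 (K * M + N)) :
    rotate K (K * M + N) (unrotate K N q s).1 (unrotate K N q s).2 = (q, s) := by
  obtain ⟨hmono, hqp, h0⟩ := hq
  have he := isLeast_sInf_setOf_nonneg (hmono.add_const s)
  set e := sInf {j | 0 ≤ q j + s}
  rw [unrotate_eq he]
  have hdiv := Int.mul_ediv_add_emod (s + K * e) N
  set u := (s + K * e) / N
  have hstep : step K ((s + K * e) % N) (fun j => q (j + e) + s) =
      fun j => step K 0 q (j + (e + u * M)) := funext fun j => by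
    simp only [step]
    rw [← add_assoc, hqp.add_mul]
    linear_combination -hdiv
  have hi : IsFirstMin (walk (step K ((s + K * e) % N) (fun j => q (j + e) + s)))
      (-(e + u * M)) := by
    rw [hstep, isFirstMin_walk_comp_add_right, neg_add_cancel]
    exact h0
  rw [rotate_eq _ hi, Prod.ext_iff]
  refine ⟨funext fun j => ?_, ?_⟩
  · simp only
    rw [show j + -(e + u * M) + e = j + -u * M by ring, hqp.add_mul]
    linear_combination -hdiv
  · simp only
    rw [show (s + K * e) % N + K * -(e + u * M) = s + (K * M + N) * -u by
        linear_combination hdiv,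
      Int.add_mul_emod_self_left, Int.emod_eq_of_lt hs.1 hs.2]

lemma bijOn_rotate (hM : 0 < M) (hN : 0 < N) (hn : 0 < K * M + N) :
    Set.BijOn (fun p => rotate K (K * M + N) p.1 p.2)
      (normalizedSeqs M (K * M + N) ×ˢ Set.Ico 0 N)
      (balancedSeqs M K N ×ˢ Set.Ico 0 (K * M + N)) :=
  Set.InvOn.bijOn (f' := fun p => unrotate K N p.1 p.2)
    ⟨fun _ hp => unrotate_rotate hM hN hp.1 hp.2, fun _ hp => rotate_unrotate hp.1 hp.2⟩
    (mapsTo_rotate hM hN hn) (mapsTo_unrotate hN)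

end Rotation

lemma mem_Ico_of_mem_normalizedSeqs {M n : ℤ} {q : ℤ → ℤ} (hq : q ∈ normalizedSeqs M n)
    {a : ℤ} (ha₀ : 0 ≤ a) (haM : a < M) : q a ∈ Set.Ico 0 n := by
  obtain ⟨hmono, hqp, h0⟩ := hq
  obtain ⟨hneg, hnonneg⟩ := (isLeast_setOf_nonneg_zero_iff hmono.monotone).1 h0
  have := hqp (-1)
  exact ⟨hnonneg.trans (hmono.monotone ha₀),
    (hmono.monotone (show a ≤ -1 + M by omega)).trans_lt (by omega)⟩

section PeriodicExtension

variable {M : ℕ} [NeZero M] {n : ℤ}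

def periodicExtension (n : ℤ) (I : Fin M → ℤ) (j : ℤ) : ℤ :=
  I (Fin.ofNat M (j % M).toNat) + j / M * n

lemma periodicExtension_add_mul (I : Fin M → ℤ) (a : Fin M) (t : ℤ) :
    periodicExtension n I (a + t * M) = I a + t * n := by
  have hM : (0 : ℤ) < M := by exact_mod_cast Nat.pos_of_neZero M
  have ha : (a : ℤ) < M := by exact_mod_cast a.isLt
  have hmod : ((a : ℤ) + t * M) % M = a := by
    rw [Int.add_mul_emod_self_right, Int.emod_eq_of_lt (by positivity) ha]
  have hdiv : ((a : ℤ) + t * M) / M = t := by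
    rw [Int.add_mul_ediv_right _ _ hM.ne', Int.ediv_eq_zero_of_lt (by positivity) ha, zero_add]
  simp only [periodicExtension, hmod, hdiv, Int.toNat_natCast, Fin.ofNat_val_eq_self]

@[simp] lemma periodicExtension_natCast (I : Fin M → ℤ) (a : Fin M) :
    periodicExtension n I a = I a := by
  simpa using periodicExtension_add_mul (n := n) I a 0

lemma periodicExtension_zero (I : Fin M → ℤ) : periodicExtension n I 0 = I 0 := by
  simpa using periodicExtension_natCast (n := n) I 0

lemma periodicExtension_neg_one (I : Fin M → ℤ) :
    periodicExtension n I (-1) = I ⟨M - 1, Nat.sub_one_lt (NeZero.ne M)⟩ - n := by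
  have := periodicExtension_add_mul (n := n) I ⟨M - 1, Nat.sub_one_lt (NeZero.ne M)⟩ (-1)
  rw [show ((M - 1 : ℕ) : ℤ) + -1 * M = -1 by have := Nat.pos_of_neZero M; push_cast [this]; ring]
    at this
  linarith

lemma isQuasiPeriodic_periodicExtension (I : Fin M → ℤ) :
    IsQuasiPeriodic M n (periodicExtension n I) := fun j => by
  have hM : (M : ℤ) ≠ 0 := by exact_mod_cast NeZero.ne M
  simp only [periodicExtension, Int.add_emod_right, Int.add_ediv_of_dvd_right (dvd_refl _),
    Int.ediv_self hM]
  ring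

lemma IsQuasiPeriodic.periodicExtension_eq {q : ℤ → ℤ} (hq : IsQuasiPeriodic M n q) :
    periodicExtension n (fun a : Fin M => q a) = q := funext fun j => by
  have hM : (0 : ℤ) < M := by exact_mod_cast Nat.pos_of_neZero M
  have hj := Int.mul_ediv_add_emod j M
  have hlt := Int.emod_lt_of_pos j hM
  have hval : ((Fin.ofNat M (j % M).toNat : Fin M) : ℤ) = j % M := by
    rw [Fin.val_ofNat, Nat.mod_eq_of_lt (by omega), Int.toNat_of_nonneg (Int.emod_nonneg j hM.ne')]
  rw [periodicExtension, hval, ← hq.add_mul, show j % M + j / M * M = j by linarith]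

lemma strictMono_periodicExtension {I : Fin M → ℤ} (hI : StrictMono I)
    (hwrap : periodicExtension n I (-1) < I 0) : StrictMono (periodicExtension n I) := by
  have hqp := isQuasiPeriodic_periodicExtension (n := n) I
  refine hqp.strictMono (by exact_mod_cast Nat.pos_of_neZero M) fun a ha₀ haM => ?_
  lift a to ℕ using ha₀
  rcases Nat.lt_or_ge (a + 1) M with h | h
  · have e₁ := periodicExtension_natCast (n := n) I ⟨a, by omega⟩
    have e₂ := periodicExtension_natCast (n := n) I ⟨a + 1, h⟩
    push_cast at e₁ e₂
    rw [e₁, e₂]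
    exact hI (Fin.mk_lt_mk.2 (by omega))
  · have h₁ := hqp (-1)
    have h₂ := hqp 0
    rw [show (-1 : ℤ) + M = a by omega] at h₁
    rw [zero_add, periodicExtension_zero] at h₂
    rw [show (a : ℤ) + 1 = M by omega, h₂, h₁]
    linarith

lemma periodicExtension_mem_normalizedSeqs {I : Fin M → ℤ} (hI : StrictMono I)
    (hrange : ∀ a, I a ∈ Set.Ico 0 n) : periodicExtension n I ∈ normalizedSeqs M n := by
  have hneg : periodicExtension n I (-1) < 0 := by
    rw [periodicExtension_neg_one]
    linarith [(hrange ⟨M - 1, Nat.sub_one_lt (NeZero.ne M)⟩).2]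
  have hmono := strictMono_periodicExtension hI (hneg.trans_le (hrange 0).1)
  exact ⟨hmono, isQuasiPeriodic_periodicExtension I,
    (isLeast_setOf_nonneg_zero_iff hmono.monotone).2
      ⟨hneg, periodicExtension_zero I ▸ (hrange 0).1⟩⟩

def normalizedSeqsEquiv : normalizedSeqs M n ≃ (Fin M ↪o Set.Ico (0 : ℤ) n) where
  toFun q := OrderEmbedding.ofStrictMono
    (fun a => ⟨q.1 a,
      mem_Ico_of_mem_normalizedSeqs q.2 (by positivity) (by exact_mod_cast a.isLt)⟩)
    fun a b h => Subtype.mk_lt_mk.2 (q.2.1 (by exact_mod_cast h))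
  invFun e := ⟨periodicExtension n (fun a => (e a : ℤ)),
    periodicExtension_mem_normalizedSeqs (fun _ _ h => e.strictMono h) fun a => (e a).2⟩
  left_inv q := Subtype.ext q.2.2.1.periodicExtension_eq
  right_inv e := by ext a; simp

lemma card_normalizedSeqs (n : ℕ) : Nat.card (normalizedSeqs M n) = n.choose M := by
  rw [Nat.card_congr (normalizedSeqsEquiv.trans Set.powersetCard.ofFinEmbEquiv),
    Set.powersetCard.card]
  simp

def IsBetheSeq (M N K : ℕ) (I : Fin M → ℤ) : Prop :=
  StrictMono I ∧
    ∀ r : ℕ, 1 ≤ r → r ≤ M →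
      ((↑(r * (r - 1) / 2) * (K : ℤ) ≤
          ∑ j ∈ Finset.univ.filter (fun j : Fin M => (j : ℕ) < r), I j) ∧
        (∑ j ∈ Finset.univ.filter (fun j : Fin M => M - r ≤ (j : ℕ)), I j ≤
          (r : ℤ) * M * K - ↑(r * (r + 1) / 2) * K + r * N - 1))

lemma walk_step_periodicExtension_natCast (n K : ℤ) (I : Fin M → ℤ) :
    ∀ r : ℕ, r ≤ M → walk (step K 0 (periodicExtension n I)) r =
      ∑ j ∈ univ.filter (fun j : Fin M => (j : ℕ) < r), I j - ↑(r * (r - 1) / 2) * K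
  | 0, _ => by simp
  | r + 1, hr => by
    have hfilter : univ.filter (fun j : Fin M => (j : ℕ) < r + 1) =
        insert ⟨r, hr⟩ (univ.filter fun j : Fin M => (j : ℕ) < r) := by
      ext j; simp [Fin.ext_iff]; omega
    have hval := periodicExtension_natCast (n := n) I ⟨r, hr⟩
    simp only at hval
    rw [Nat.cast_succ, walk_add_one, walk_step_periodicExtension_natCast n K I r (by omega),
      hfilter, sum_insert (by simp), Nat.triangle_succ, step, hval]
    push_cast
    ring

lemma walk_step_periodicExtension_neg_natCast (n K : ℤ) (I : Fin M → ℤ) :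
    ∀ r : ℕ, r ≤ M → walk (step K 0 (periodicExtension n I)) (-r) =
      r * n - ↑(r * (r + 1) / 2) * K - ∑ j ∈ univ.filter (fun j : Fin M => M - r ≤ (j : ℕ)), I j
  | 0, _ => by simp [Finset.filter_false_of_mem]
  | r + 1, hr => by
    have hfilter : univ.filter (fun j : Fin M => M - (r + 1) ≤ (j : ℕ)) =
        insert ⟨M - 1 - r, by omega⟩ (univ.filter fun j : Fin M => M - r ≤ (j : ℕ)) := by
      ext j; simp [Fin.ext_iff]; omega
    have hval := periodicExtension_add_mul (n := n) I ⟨M - 1 - r, by omega⟩ (-1)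
    rw [show ((M - 1 - r : ℕ) : ℤ) + -1 * M = -(r + 1 : ℕ) by omega] at hval
    have htri : (r + 1) * (r + 1 + 1) / 2 = r * (r + 1) / 2 + (r + 1) := by
      rw [show (r + 1) * (r + 1 + 1) = r * (r + 1) + 2 * (r + 1) by ring,
        Nat.add_mul_div_left _ _ two_pos]
    have hwalk := walk_add_one (step K 0 (periodicExtension n I)) (-(r + 1 : ℕ))
    rw [show -((r + 1 : ℕ) : ℤ) + 1 = -r by push_cast; ring,
      walk_step_periodicExtension_neg_natCast n K I r (by omega)] at hwalk
    rw [step, hval] at hwalk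
    rw [hfilter, sum_insert (by simp; omega), htri]
    push_cast at hwalk ⊢
    linarith

lemma isBetheSeq_iff {N K : ℕ} (I : Fin M → ℤ) :
    IsBetheSeq M N K I ↔ periodicExtension ((K : ℤ) * M + N) I ∈ balancedSeqs M K N := by
  set q := periodicExtension ((K : ℤ) * M + N) I
  have hqp : IsQuasiPeriodic M (K * M + N) q := isQuasiPeriodic_periodicExtension I
  constructor
  · rintro ⟨hI, hr⟩
    have hwin : ∀ r : ℕ, 1 ≤ r → r ≤ M →
        0 ≤ walk (step K 0 q) r ∧ 0 < walk (step K 0 q) (-r) := fun r h₁ h₂ => by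
      rw [walk_step_periodicExtension_natCast _ _ I r h₂,
        walk_step_periodicExtension_neg_natCast _ _ I r h₂]
      obtain ⟨hlow, hhigh⟩ := hr r h₁ h₂
      constructor <;> linarith
    have hwrap : q (-1) < I 0 := by
      have h₀ := walk_add_one (step K 0 q) 0
      have h₁ := walk_add_one (step K 0 q) (-1)
      simp only [walk_zero, zero_add, neg_add_cancel, step, periodicExtension_zero, q] at h₀ h₁
      have := hwin 1 le_rfl (Nat.one_le_iff_ne_zero.2 (NeZero.ne M))
      push_cast at this
      linarith [Int.natCast_nonneg K]
    have hmono := strictMono_periodicExtension hI hwrap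
    refine ⟨hmono, hqp, isFirstMin_of_window (M := M) (by exact_mod_cast Nat.pos_of_neZero M)
      ?_ fun r h₁ h₂ => ?_⟩
    · simp_rw [walk_add_sub_walk (hqp.step 0)]
      exact fun a b h => by linarith [mul_le_mul_of_nonneg_left h (Int.natCast_nonneg N)]
    · lift r to ℕ using (by omega)
      simpa using hwin r (by omega) (by omega)
  · rintro ⟨hmono, -, hmin⟩
    refine ⟨fun a b h => by simpa [q] using hmono (show (a : ℤ) < b by exact_mod_cast h),
      fun r h₁ h₂ => ?_⟩
    have hup := (isFirstMin_iff.1 hmin).1 r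
    have hdown := (isFirstMin_iff.1 hmin).2 (-r) (by omega)
    rw [walk_zero, walk_step_periodicExtension_natCast _ _ I r h₂] at hup
    rw [walk_zero, walk_step_periodicExtension_neg_natCast _ _ I r h₂] at hdown
    constructor <;> linarith

def balancedSeqsEquiv (N K : ℕ) :
    balancedSeqs M K N ≃ {I : Fin M → ℤ // IsBetheSeq M N K I} where
  toFun q := ⟨fun a => q.1 a,
    (isBetheSeq_iff _).2 (by rw [q.2.2.1.periodicExtension_eq]; exact q.2)⟩
  invFun I := ⟨periodicExtension _ I.1, (isBetheSeq_iff _).1 I.2⟩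
  left_inv q := Subtype.ext q.2.2.1.periodicExtension_eq
  right_inv I := Subtype.ext (funext fun a => periodicExtension_natCast _ a)

lemma card_balancedSeqs_mul {N : ℕ} (K : ℕ) (hN : 0 < N) :
    Nat.card (balancedSeqs M K N) * (K * M + N) = (K * M + N).choose M * N := by
  have hM : (0 : ℤ) < M := by exact_mod_cast Nat.pos_of_neZero M
  have hcast : ((K * M + N : ℕ) : ℤ) = K * M + N := by push_cast; ring
  have h := Nat.card_congr ((bijOn_rotate (K := K) (N := N) hM (by exact_mod_cast hN)
    (by rw [← hcast]; exact_mod_cast Nat.add_pos_right _ hN)).equiv _)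
  simp only [← hcast] at h
  have hIco (n : ℕ) : Nat.card (Set.Ico (0 : ℤ) n) = n := by simp
  rw [Nat.card_congr (Equiv.Set.prod _ _), Nat.card_congr (Equiv.Set.prod _ _), Nat.card_prod,
    Nat.card_prod, card_normalizedSeqs, hIco, hIco] at h
  exact h.symm

end PeriodicExtension

end

end FussCatalan

theorem count_rational_bethe_solutions_general (M N K : ℕ) (hM : 0 < M) (hN : 0 < N) :
    (Nat.card {I : Fin M → ℤ // StrictMono I ∧
        ∀ r : ℕ, 1 ≤ r → r ≤ M →
          ((↑(r * (r - 1) / 2) * (K : ℤ) ≤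
              ∑ j ∈ Finset.univ.filter (fun j : Fin M => (j : ℕ) < r), I j) ∧
            (∑ j ∈ Finset.univ.filter (fun j : Fin M => M - r ≤ (j : ℕ)), I j ≤
              (r : ℤ) * M * K - ↑(r * (r + 1) / 2) * K + r * N - 1))} : ℚ) =
      (N : ℚ) / (K * M + N) * (Nat.choose (K * M + N) M) := by
  have : NeZero M := ⟨hM.ne'⟩
  change (Nat.card {I // FussCatalan.IsBetheSeq M N K I} : ℚ) = _
  rw [← Nat.card_congr (FussCatalan.balancedSeqsEquiv N K)]
  have key := FussCatalan.card_balancedSeqs_mul (M := M) K hN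
  have hn : (K * M + N : ℚ) ≠ 0 := by positivity
  field_simp
  exact_mod_cast key.trans (mul_comm _ _)

theorem count_rational_bethe_solutions (M N K : ℕ) (hM : 0 < M) (hN : 0 < N) (hK : 0 < K) :
    (Nat.card {I : Fin M → ℤ // StrictMono I ∧
        ∀ r : ℕ, 1 ≤ r → r ≤ M →
          ((↑(r * (r - 1) / 2) * (K : ℤ) ≤
              ∑ j ∈ Finset.univ.filter (fun j : Fin M => (j : ℕ) < r), I j) ∧
            (∑ j ∈ Finset.univ.filter (fun j : Fin M => M - r ≤ (j : ℕ)), I j ≤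
              (r : ℤ) * M * K - ↑(r * (r + 1) / 2) * K + r * N - 1))} : ℚ) =
      (N : ℚ) / (K * M + N) * (Nat.choose (K * M + N) M) :=
  count_rational_bethe_solutions_general M N K hM hN
end
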